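/- arXiv:1603.03214 — 2 statements merged into one kernel-verified Lean document; each statement's English description precedes it below -/
import Mathlib

section
/- For any fixed integer l ≥ 0 and any R > 0, the radial Coulomb eigenfunctions converge uniformly on (0, R) to a Bessel profile: lim_{n→∞} sup_{r ∈ (0,R)} | f_{nl}(r) − J_{2l+1}(√(8r)) / √(8r) | = 0, where the limit is over integers n > l. -/
open MeasureTheory Metric Set

noncomputable section

/-- The associated Laguerre polynomial `L_k^α(x) = ∑_{i=0}^{k} (-1)^i C(k+α, k-i) x^i / i!`. -/
def laguerre (k α : ℕ) (x : ℝ) : ℝ :=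
  ∑ i ∈ Finset.range (k + 1),
    (-1 : ℝ) ^ i * (Nat.choose (k + α) (k - i)) * x ^ i / (Nat.factorial i)

/-- The normalization constant `A_{nl} = 2^{l-1} (n-l-1)! / (n+l)!`. -/
def coulombA (n l : ℕ) : ℝ :=
  (2 : ℝ) ^ ((l : ℤ) - 1) * (Nat.factorial (n - l - 1)) / (Nat.factorial (n + l))

/-- The radial Coulomb eigenfunction `f_{nl}(r) = A_{nl} e^{-r/n} r^l L_{n-l-1}^{2l+1}(2r/n)`. -/
def fnl (n l : ℕ) (r : ℝ) : ℝ :=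
  coulombA n l * Real.exp (-r / n) * r ^ l * laguerre (n - l - 1) (2 * l + 1) (2 * r / n)

/-- The Bessel function of the first kind of integer order `ν`. -/
def besselJ (ν : ℕ) (x : ℝ) : ℝ :=
  ∑' j : ℕ, (-1 : ℝ) ^ j / ((Nat.factorial j) * (Nat.factorial (j + ν))) * (x / 2) ^ (2 * j + ν)

/-- The Bessel profile `J_{2l+1}(√(8r)) / √(8r)`. -/
def besselProfile (l : ℕ) (r : ℝ) : ℝ :=
  besselJ (2 * l + 1) (Real.sqrt (8 * r)) / Real.sqrt (8 * r)

/-!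
Both sides are power series in `r` with the same coefficients `cᵢ(r)` up to weights:
`besselProfile l r = ∑ cᵢ(r)` and `fnl n l r = e^{-r/n} ∑ cᵢ(r) wₙᵢ`, where
`wₙᵢ = (n-l-1)(n-l-2)⋯(n-l-i) / nⁱ` lies in `[0, 1]`, vanishes for `i ≥ n - l` and is at
least `1 - (i+l)²/n`. So for `0 < r ≤ R` the `i`-th term of the difference is at most
`(2R)^{i+l}/i! · min 1 ((R + (i+l)²)/n)`, uniformly in `r`, and the sum of these bounds tends to
`0` by dominated convergence for series (Tannery's theorem).
-/

open Filter Topology Nat Real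

def besselProfileTerm (l i : ℕ) (r : ℝ) : ℝ :=
  (-1) ^ i * (2 * r) ^ (i + l) / (2 * i ! * (i + (2 * l + 1))!)

def laguerreWeight (n l i : ℕ) : ℝ :=
  ((n - l - 1).descFactorial i : ℝ) / (n : ℝ) ^ i

theorem besselProfile_eq_tsum (l : ℕ) {r : ℝ} (hr : 0 < r) :
    besselProfile l r = ∑' i, besselProfileTerm l i r := by
  unfold besselProfile besselJ
  rw [← tsum_div_const]
  refine tsum_congr fun i => ?_
  have hsq : (√(8 * r) / 2) ^ 2 = 2 * r := by
    rw [div_pow, Real.sq_sqrt (by positivity)]; ring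
  have hpow : (√(8 * r) / 2) ^ (2 * i + (2 * l + 1)) = (2 * r) ^ (i + l) * (√(8 * r) / 2) := by
    rw [← hsq, ← pow_mul, ← pow_succ]; ring_nf
  have : √(8 * r) ≠ 0 := by positivity
  rw [hpow, besselProfileTerm]
  field_simp

theorem abs_besselProfileTerm_le (l i : ℕ) {r M : ℝ} (hr : |r| ≤ M) :
    |besselProfileTerm l i r| ≤ (2 * M) ^ (i + l) / i ! := by
  have hM : 0 ≤ M := (abs_nonneg r).trans hr
  have hfac : (1 : ℝ) ≤ (i + (2 * l + 1))! := by exact_mod_cast (i + (2 * l + 1)).factorial_pos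
  rw [besselProfileTerm, abs_div, abs_mul, abs_pow, abs_neg, abs_one, one_pow, one_mul, abs_pow,
    abs_mul, abs_two, abs_of_pos (by positivity : (0 : ℝ) < 2 * i ! * (i + (2 * l + 1))!)]
  calc (2 * |r|) ^ (i + l) / (2 * i ! * (i + (2 * l + 1))!)
      ≤ (2 * M) ^ (i + l) / (1 * i ! * 1) := by gcongr; norm_num
    _ = (2 * M) ^ (i + l) / i ! := by ring

theorem summable_pow_add_div_factorial (x : ℝ) (l : ℕ) :
    Summable fun i : ℕ => x ^ (i + l) / i ! :=
  ((Real.summable_pow_div_factorial x).mul_left (x ^ l)).congr fun i => by ring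

theorem coulombA_mul_choose {n l i : ℕ} (hi : i + l < n) :
    coulombA n l * (n + l).choose (n - l - 1 - i) =
      2 ^ l / 2 * (n - l - 1).descFactorial i / (i + (2 * l + 1))! := by
  have hchoose := Nat.choose_mul_factorial_mul_factorial (show n - l - 1 - i ≤ n + l by omega)
  rw [show n + l - (n - l - 1 - i) = i + (2 * l + 1) by omega] at hchoose
  have hdesc := Nat.factorial_mul_descFactorial (show i ≤ n - l - 1 by omega)
  rw [coulombA, zpow_sub₀ two_ne_zero, zpow_natCast, zpow_one]
  field_simp
  rw [← hdesc, ← hchoose]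
  push_cast
  ring

theorem fnl_eq_sum {n l : ℕ} (hn : l < n) (r : ℝ) :
    fnl n l r = exp (-r / n) *
      ∑ i ∈ Finset.range (n - l), besselProfileTerm l i r * laguerreWeight n l i := by
  rw [fnl, laguerre, show n - l - 1 + 1 = n - l by omega,
    show n - l - 1 + (2 * l + 1) = n + l by omega, Finset.mul_sum, Finset.mul_sum]
  refine Finset.sum_congr rfl fun i hi => ?_
  have key := coulombA_mul_choose (show i + l < n by simp at hi; omega)
  rw [besselProfileTerm, laguerreWeight]
  linear_combination (exp (-r / n) * r ^ l * (-1) ^ i * (2 * r / n) ^ i / i !) * key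

theorem laguerreWeight_eq_zero_of_lt {n l i : ℕ} (hi : n - l - 1 < i) :
    laguerreWeight n l i = 0 := by
  rw [laguerreWeight, descFactorial_eq_zero_iff_lt.2 hi, cast_zero, zero_div]

theorem fnl_eq_tsum {n l : ℕ} (hn : l < n) (r : ℝ) :
    fnl n l r = exp (-r / n) * ∑' i, besselProfileTerm l i r * laguerreWeight n l i := by
  rw [fnl_eq_sum hn, tsum_eq_sum (s := Finset.range (n - l))]
  intro i hi
  rw [laguerreWeight_eq_zero_of_lt (by simp at hi; omega), mul_zero]

theorem laguerreWeight_nonneg (n l i : ℕ) : 0 ≤ laguerreWeight n l i := by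
  unfold laguerreWeight; positivity

theorem laguerreWeight_le_one (n l i : ℕ) : laguerreWeight n l i ≤ 1 := by
  refine div_le_one_of_le₀ ?_ (by positivity)
  exact_mod_cast (descFactorial_le_pow _ _).trans (Nat.pow_le_pow_left (by omega) i)

theorem one_sub_sq_div_le_laguerreWeight {n : ℕ} (hn : 0 < n) (l i : ℕ) :
    1 - (i + l : ℝ) ^ 2 / n ≤ laguerreWeight n l i := by
  have hn' : (0 : ℝ) < n := by exact_mod_cast hn
  rcases lt_or_ge (i + l) n with hil | hil
  · have hil' : (i + l : ℝ) ≤ n := by exact_mod_cast hil.le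
    have hdesc : ((n : ℝ) - (i + l)) ^ i ≤ (n - l - 1).descFactorial i := by
      have h := pow_sub_le_descFactorial (n - l - 1) i
      rw [show n - l - 1 + 1 - i = n - (i + l) by omega] at h
      rw [← show ((n - (i + l) : ℕ) : ℝ) = n - (i + l) by push_cast [hil.le]; ring]
      exact_mod_cast h
    calc 1 - (i + l : ℝ) ^ 2 / n ≤ 1 + i * (-((i + l) / n)) := by
          rw [sq, mul_div_assoc]
          nlinarith [div_nonneg (by positivity : (0 : ℝ) ≤ i + l) hn'.le]
      _ ≤ (1 + -((i + l) / n)) ^ i := by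
          refine one_add_mul_le_pow ?_ i
          linarith [(div_le_one hn').2 hil']
      _ = ((n : ℝ) - (i + l)) ^ i / (n : ℝ) ^ i := by
          rw [← div_pow]; congr 1; field_simp; ring
      _ ≤ laguerreWeight n l i := by
          rw [laguerreWeight]; gcongr
  · have hsq : (n : ℝ) ≤ (i + l : ℝ) ^ 2 / n := by
      rw [le_div_iff₀ hn', ← sq]
      gcongr
      exact_mod_cast hil
    have : (1 : ℝ) ≤ n := by exact_mod_cast hn
    linarith [laguerreWeight_nonneg n l i]

theorem abs_exp_mul_laguerreWeight_sub_one_le {n : ℕ} (hn : 0 < n) (l i : ℕ) {r R : ℝ}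
    (hr : 0 ≤ r) (hrR : r ≤ R) :
    |exp (-r / n) * laguerreWeight n l i - 1| ≤ min 1 ((R + (i + l : ℝ) ^ 2) / n) := by
  have hn' : (0 : ℝ) < n := by exact_mod_cast hn
  set x := exp (-r / n)
  set y := laguerreWeight n l i
  have hx0 : 0 < x := exp_pos _
  have hx1 : x ≤ 1 := exp_le_one_iff.2 (div_nonpos_of_nonpos_of_nonneg (by linarith) hn'.le)
  have hx : 1 - R / n ≤ x := by
    have : r / n ≤ R / n := by gcongr
    linarith [add_one_le_exp (-r / n), neg_div (n : ℝ) r]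
  have hy0 : 0 ≤ y := laguerreWeight_nonneg n l i
  have hy1 : y ≤ 1 := laguerreWeight_le_one n l i
  have hy : 1 - (i + l : ℝ) ^ 2 / n ≤ y := one_sub_sq_div_le_laguerreWeight hn l i
  have hxy : x * y ≤ 1 := mul_le_one₀ hx1 hy0 hy1
  rw [abs_sub_comm, abs_of_nonneg (by linarith), le_min_iff, add_div]
  -- `1 - x y ≤ (1 - x) + (1 - y)` because `(1 - x) (1 - y) ≥ 0`
  constructor <;>
    nlinarith [mul_nonneg (sub_nonneg.2 hx1) (sub_nonneg.2 hy1), mul_nonneg hx0.le hy0]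

theorem tendsto_tsum_mul_min_one_div {D c : ℕ → ℝ} (hD : Summable D) (hc : ∀ i, 0 ≤ c i) :
    Tendsto (fun n : ℕ => ∑' i, D i * min 1 (c i / n)) atTop (𝓝 0) := by
  have h := tendsto_tsum_of_dominated_convergence (𝓕 := atTop)
    (f := fun (n : ℕ) i => D i * min 1 (c i / n)) (g := fun _ => 0) hD.abs (fun i => ?_)
    (Eventually.of_forall fun n i => ?_)
  · simpa using h
  · simpa using ((tendsto_const_nhds (x := (1 : ℝ))).min
      (tendsto_const_div_atTop_nhds_zero_nat (c i))).const_mul (D i)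
  · rw [norm_mul, Real.norm_eq_abs, Real.norm_eq_abs]
    refine mul_le_of_le_one_right (abs_nonneg _) ?_
    rw [abs_le]
    constructor
    · exact (neg_one_lt_zero.le).trans (le_min zero_le_one (div_nonneg (hc i) n.cast_nonneg))
    · exact min_le_left _ _

theorem abs_fnl_sub_besselProfile_le {n l : ℕ} (hn : l < n) {r R : ℝ} (hr : 0 < r)
    (hrR : r ≤ R) :
    |fnl n l r - besselProfile l r| ≤
      ∑' i, (2 * R) ^ (i + l) / i ! * min 1 ((R + (i + l : ℝ) ^ 2) / n) := by
  set a := fun i => besselProfileTerm l i r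
  set w := laguerreWeight n l
  set D := fun i : ℕ => (2 * R) ^ (i + l) / (i ! : ℝ)
  have hD : Summable D := summable_pow_add_div_factorial (2 * R) l
  have haD (i : ℕ) : |a i| ≤ D i := abs_besselProfileTerm_le l i (by rwa [abs_of_pos hr])
  have ha : Summable a := hD.of_norm_bounded haD
  have haw : Summable fun i => a i * w i :=
    ha.abs.of_norm_bounded fun i => by
      rw [norm_mul, Real.norm_eq_abs, Real.norm_eq_abs, abs_of_nonneg (laguerreWeight_nonneg n l i)]
      exact mul_le_of_le_one_right (abs_nonneg _) (laguerreWeight_le_one n l i)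
  have hdiff : fnl n l r - besselProfile l r = ∑' i, a i * (exp (-r / n) * w i - 1) := by
    rw [fnl_eq_tsum hn, besselProfile_eq_tsum l hr, ← tsum_mul_left,
      ← (haw.mul_left _).tsum_sub ha]
    exact tsum_congr fun i => by ring
  have hterm (i : ℕ) :
      ‖a i * (exp (-r / n) * w i - 1)‖ ≤ D i * min 1 ((R + (i + l : ℝ) ^ 2) / n) := by
    rw [norm_mul, Real.norm_eq_abs, Real.norm_eq_abs]
    exact mul_le_mul (haD i) (abs_exp_mul_laguerreWeight_sub_one_le (by omega) l i hr.le hrR)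
      (abs_nonneg _) ((abs_nonneg _).trans (haD i))
  have hbound : Summable fun i => D i * min 1 ((R + (i + l : ℝ) ^ 2) / n) :=
    hD.of_nonneg_of_le (fun i => (norm_nonneg _).trans (hterm i))
      fun i => mul_le_of_le_one_right ((abs_nonneg _).trans (haD i)) (min_le_left _ _)
  rw [hdiff, ← Real.norm_eq_abs]
  exact tsum_of_norm_bounded hbound.hasSum hterm

/-- For fixed `l` and `R > 0`, the radial Coulomb eigenfunctions `f_{nl}` converge uniformly
on `(0, R)` to the Bessel profile `J_{2l+1}(√(8r))/√(8r)` as `n → ∞` (over integers `n > l`). -/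
theorem fnl_tendsto_besselProfile_uniformly (l : ℕ) (R : ℝ) (hR : 0 < R) :
    ∀ ε : ℝ, 0 < ε → ∃ N : ℕ, ∀ n : ℕ, N ≤ n → l < n →
      ∀ r ∈ Set.Ioo (0 : ℝ) R, |fnl n l r - besselProfile l r| < ε := by
  intro ε hε
  have hbound := tendsto_tsum_mul_min_one_div (summable_pow_add_div_factorial (2 * R) l)
    (c := fun i => R + (i + l : ℝ) ^ 2) fun i => add_nonneg hR.le (sq_nonneg _)
  obtain ⟨N, hN⟩ := eventually_atTop.1 ((tendsto_order.1 hbound).2 ε hε)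
  exact ⟨N, fun n hNn hln r hr =>
    (abs_fnl_sub_besselProfile_le hln hr.1 hr.2.le).trans_lt (hN n hNn)⟩
end
end

section
/- For any integers n ≥ 1 and 0 ≤ l ≤ n−1, the function f_{nl} satisfies the radial Coulomb equation on (0, ∞): f_{nl}''(r) + (2/r) f_{nl}'(r) − (l(l+1)/r²) f_{nl}(r) + (2/r) f_{nl}(r) − (1/n²) f_{nl}(r) = 0 for all r > 0. -/
/-!
Write `f_{nl}(r) = A_{nl} r^l h(r)` with `h(r) = e^{-r/n} L(2r/n)` and `L = L_{n-l-1}^{2l+1}`.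
The radial operator `f'' + (2/r) f' - l(l+1)/r² f` sends `r^l h` to `r^l (h'' + 2(l+1)/r h')`,
so the equation reduces to `r h'' + 2(l+1) h' + (2 - r/n²) h = 0`. With `x = 2r/n` the left side
is `(2/n) e^{-r/n}` times the Laguerre expression `x L'' + (α+1-x) L' + k L` at `k = n-l-1`,
`α = 2l+1`, for which `(2k+α+1)/n = 2`.
Laguerre's equation itself is checked coefficientwise: it is the recurrence
`(j+1)(j+1+α) a_{j+1} = (j-k) a_j` for `a_j = (-1)^j C(k+α, α+j) / j!`.
-/

open MeasureTheory Metric Set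

noncomputable section

open Polynomial

theorem Nat.cast_choose_succ_right_mul {R : Type*} [CommRing R] (N m : ℕ) :
    (N.choose (m + 1) : R) * (m + 1) = N.choose m * (N - m) := by
  rcases le_or_gt m N with hm | hm
  · have h := congrArg (Nat.cast : ℕ → R) (Nat.choose_succ_right_eq N m)
    push_cast [Nat.cast_sub hm] at h
    exact h
  · simp [Nat.choose_eq_zero_of_lt hm, Nat.choose_eq_zero_of_lt (Nat.lt_succ_of_lt hm)]

def laguerrePoly (k α : ℕ) : ℝ[X] :=
  ∑ i ∈ Finset.range (k + 1), C ((-1 : ℝ) ^ i * (k + α).choose (k - i) / i.factorial) * X ^ i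

theorem laguerre_eq_eval (k α : ℕ) : laguerre k α = fun x => (laguerrePoly k α).eval x := by
  ext x
  simp only [laguerre, laguerrePoly, eval_finsetSum, eval_mul, eval_C, eval_pow, eval_X]
  exact Finset.sum_congr rfl fun i _ => by ring

-- Unlike `C(k+α, k-i)`, `C(k+α, α+i)` vanishes for `i > k`, so the formula holds for all `i`.
theorem coeff_laguerrePoly (k α i : ℕ) :
    (laguerrePoly k α).coeff i = (-1 : ℝ) ^ i * (k + α).choose (α + i) / i.factorial := by
  simp only [laguerrePoly, finsetSum_coeff, coeff_C_mul_X_pow, Finset.sum_ite_eq,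
    Finset.mem_range]
  split_ifs with hi
  · rw [Nat.choose_symm_of_eq_add (a := k - i) (b := α + i) (by omega)]
  · rw [Nat.choose_eq_zero_of_lt (by omega)]
    simp

theorem Polynomial.coeff_X_mul_derivative {R : Type*} [Semiring R] (p : R[X]) (i : ℕ) :
    (X * derivative p).coeff i = i * p.coeff i := by
  rcases i with _ | i
  · simp
  · simpa [coeff_X_mul, coeff_derivative] using
      (Nat.cast_commute (i + 1) (p.coeff (i + 1))).symm.eq

theorem succ_mul_coeff_laguerrePoly_succ (k α j : ℕ) :
    ((j : ℝ) + 1) * (j + 1 + α) * (laguerrePoly k α).coeff (j + 1)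
      = (j - k) * (laguerrePoly k α).coeff j := by
  have h := Nat.cast_choose_succ_right_mul (R := ℝ) (k + α) (α + j)
  rw [coeff_laguerrePoly, coeff_laguerrePoly, Nat.factorial_succ]
  push_cast at h ⊢
  field_simp
  linear_combination -(-1 : ℝ) ^ j * h

theorem laguerrePoly_ode (k α : ℕ) :
    X * derivative (derivative (laguerrePoly k α))
      + (C ((α : ℝ) + 1) - X) * derivative (laguerrePoly k α)
      + C (k : ℝ) * laguerrePoly k α = 0 := by
  ext i
  simp only [add_mul, sub_mul, coeff_add, coeff_sub, coeff_C_mul, coeff_X_mul_derivative,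
    coeff_derivative, coeff_zero]
  linear_combination succ_mul_coeff_laguerrePoly_succ k α i

theorem laguerre_ode (k α : ℕ) (x : ℝ) :
    x * deriv (deriv (laguerre k α)) x + (α + 1 - x) * deriv (laguerre k α) x
      + k * laguerre k α x = 0 := by
  have hderiv (p : ℝ[X]) : deriv (fun x => p.eval x) = fun x => p.derivative.eval x :=
    funext fun x => p.deriv
  rw [laguerre_eq_eval, hderiv, hderiv]
  simpa using congrArg (eval x) (laguerrePoly_ode k α)

@[fun_prop]
theorem contDiff_laguerre (k α : ℕ) {m : WithTop ℕ∞} : ContDiff ℝ m (laguerre k α) := by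
  unfold laguerre
  fun_prop

section Calculus

variable {𝕜 : Type*} [NontriviallyNormedField 𝕜]

theorem deriv_deriv_mul {𝔸 : Type*} [NormedRing 𝔸] [NormedAlgebra 𝕜 𝔸]
    {f g : 𝕜 → 𝔸} {x : 𝕜}
    (hf : ContDiffAt 𝕜 2 f x) (hg : ContDiffAt 𝕜 2 g x) :
    deriv (deriv (f * g)) x
      = f x * deriv (deriv g) x + 2 * (deriv f x * deriv g x) + deriv (deriv f) x * g x := by
  have h := iteratedDeriv_mul hf hg
  simp only [iteratedDeriv_eq_iterate, Finset.sum_range_succ, Finset.sum_range_zero] at h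
  simpa [mul_assoc] using h

theorem deriv_deriv_comp_mul_left {E : Type*} [NormedAddCommGroup E] [NormedSpace 𝕜 E]
    (c : 𝕜) (f : 𝕜 → E) (x : 𝕜) :
    deriv (deriv fun y => f (c * y)) x = c ^ 2 • deriv (deriv f) (c * x) := by
  have h (g : 𝕜 → E) : deriv (fun y => g (c * y)) = fun y => c • deriv g (c * y) :=
    funext fun y => deriv_comp_mul_left c g y
  rw [h, deriv_fun_const_smul_field, h, smul_smul, sq]

theorem pow_mul_iter_deriv_pow (n k : ℕ) (x : 𝕜) :
    x ^ k * deriv^[k] (fun y => y ^ n) x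
      = (∏ i ∈ Finset.range k, ((n : 𝕜) - i)) * x ^ n := by
  rw [iter_deriv_pow]
  rcases le_or_gt k n with hkn | hnk
  · rw [mul_left_comm, ← pow_add, Nat.add_sub_cancel' hkn]
  · rw [Finset.prod_eq_zero (Finset.mem_range.2 hnk) (sub_self _)]
    simp

end Calculus

theorem exp_mul_laguerre_ode (k α : ℕ) {ν : ℝ} (hν : ν ≠ 0) (x : ℝ) :
    let h := fun y => Real.exp (-y / ν) * laguerre k α (2 * y / ν)
    x * deriv (deriv h) x + (α + 1) * deriv h x
      + ((2 * k + α + 1) / ν - x / ν ^ 2) * h x = 0 := by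
  intro h
  set E : ℝ → ℝ := fun y => Real.exp ((-1 / ν) * y)
  set L : ℝ → ℝ := fun y => laguerre k α ((2 / ν) * y)
  have hEL : h = E * L := by
    funext y
    simp only [h, E, L, Pi.mul_apply]
    congr 2 <;> ring
  have hE : ContDiff ℝ 2 E := by fun_prop
  have hL : ContDiff ℝ 2 L := by fun_prop
  have hE' : deriv E x = -1 / ν * E x := by simp [E, deriv_comp_mul_left]
  have hE'' : deriv (deriv E) x = (-1 / ν) ^ 2 * E x := by simp [E, deriv_deriv_comp_mul_left]
  have hL' : deriv L x = 2 / ν * deriv (laguerre k α) (2 / ν * x) := deriv_comp_mul_left _ _ _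
  have hL'' : deriv (deriv L) x = (2 / ν) ^ 2 * deriv (deriv (laguerre k α)) (2 / ν * x) :=
    deriv_deriv_comp_mul_left _ _ _
  have hh' : deriv h x = deriv E x * L x + E x * deriv L x := by
    rw [hEL]
    exact deriv_mul (hE.differentiable two_ne_zero x) (hL.differentiable two_ne_zero x)
  rw [hh', hEL, deriv_deriv_mul hE.contDiffAt hL.contDiffAt, hE', hE'', hL', hL'']
  simp only [Pi.mul_apply, L]
  linear_combination (norm := (field_simp; ring)) 2 / ν * E x * laguerre_ode k α (2 / ν * x)

def radialLaplacian (l : ℕ) (f : ℝ → ℝ) (r : ℝ) : ℝ :=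
  deriv (deriv f) r + 2 / r * deriv f r - l * (l + 1) / r ^ 2 * f r

theorem radialLaplacian_const_mul (l : ℕ) (c : ℝ) (f : ℝ → ℝ) (r : ℝ) :
    radialLaplacian l (fun x => c * f x) r = c * radialLaplacian l f r := by
  simp only [radialLaplacian, deriv_const_mul_field']
  ring

theorem radialLaplacian_pow_mul (l : ℕ) {h : ℝ → ℝ} {r : ℝ} (hh : ContDiffAt ℝ 2 h r)
    (hr : r ≠ 0) :
    radialLaplacian l (fun x => x ^ l * h x) r
      = r ^ l * (deriv (deriv h) r + 2 * (l + 1) / r * deriv h r) := by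
  have hp : ContDiffAt ℝ 2 (fun x : ℝ => x ^ l) r := by fun_prop
  have h1 : r * deriv (fun x => x ^ l) r = l * r ^ l := by
    simpa using pow_mul_iter_deriv_pow l 1 r
  have h2 : r ^ 2 * deriv (deriv fun x => x ^ l) r = l * (l - 1) * r ^ l := by
    simpa only [Function.iterate_succ, Function.iterate_zero, Function.comp_apply, id,
      Finset.prod_range_succ, Finset.prod_range_zero, Nat.cast_zero, Nat.cast_one, one_mul,
      sub_zero] using pow_mul_iter_deriv_pow (𝕜 := ℝ) l 2 r
  have hd : deriv (fun x => x ^ l * h x) r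
      = deriv (fun x : ℝ => x ^ l) r * h r + r ^ l * deriv h r :=
    deriv_mul (hp.differentiableAt two_ne_zero) (hh.differentiableAt two_ne_zero)
  unfold radialLaplacian
  rw [hd, show (fun x => x ^ l * h x) = (fun x : ℝ => x ^ l) * h from rfl,
    deriv_deriv_mul hp hh, Pi.mul_apply]
  field_simp
  linear_combination (norm := ring_nf) (h r) * h2 + 2 * (r * deriv h r + h r) * h1

/-- For integers `n ≥ 1` and `0 ≤ l ≤ n-1`, the function `f_{nl}` satisfies the radial
Coulomb equation `f'' + (2/r) f' - (l(l+1)/r²) f + (2/r) f - (1/n²) f = 0` on `(0, ∞)`. -/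
theorem fnl_radial_equation (n l : ℕ) (hn : 1 ≤ n) (hl : l ≤ n - 1) (r : ℝ) (hr : 0 < r) :
    deriv (deriv (fnl n l)) r + (2 / r) * deriv (fnl n l) r
        - ((l : ℝ) * ((l : ℝ) + 1) / r ^ 2) * fnl n l r
        + (2 / r) * fnl n l r - (1 / (n : ℝ) ^ 2) * fnl n l r = 0 := by
  have hn0 : (n : ℝ) ≠ 0 := Nat.cast_ne_zero.mpr (by omega)
  have hk : (2 * ((n - l - 1 : ℕ) : ℝ) + ((2 * l + 1 : ℕ) : ℝ) + 1) / n = 2 := by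
    rw [Nat.cast_sub (by omega), Nat.cast_sub (by omega)]
    field_simp
    push_cast
    ring
  set h := fun y => Real.exp (-y / n) * laguerre (n - l - 1) (2 * l + 1) (2 * y / n)
  have hode := exp_mul_laguerre_ode (n - l - 1) (2 * l + 1) hn0 r
  rw [hk] at hode
  have hf : fnl n l = fun x => coulombA n l * (x ^ l * h x) := by
    funext x
    simp only [fnl, h]
    ring
  have hrad : radialLaplacian l (fnl n l) r
      = coulombA n l * r ^ l * (deriv (deriv h) r + 2 * (l + 1) / r * deriv h r) := by
    rw [hf, radialLaplacian_const_mul,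
      radialLaplacian_pow_mul l (by simp only [h]; fun_prop) hr.ne', mul_assoc]
  calc _ = radialLaplacian l (fnl n l) r + (2 / r - 1 / (n : ℝ) ^ 2) * fnl n l r := by
        unfold radialLaplacian
        ring
    _ = coulombA n l * r ^ l / r * (r * deriv (deriv h) r + ((2 * l + 1 : ℕ) + 1) * deriv h r
          + (2 - r / (n : ℝ) ^ 2) * h r) := by
        rw [hrad, hf]
        field_simp
        push_cast
        ring
    _ = 0 := by rw [hode, mul_zero]
end
end
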